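/- arXiv:1708.08526 — 3 statements merged into one kernel-verified Lean document; each statement's English description precedes it below -/
import Mathlib

section
/- Closed form for sums of squared harmonic tails (Lemma 3): Fix a positive integer n and define γ_{n,i} := ∑_{j=i}^n 1/j for 1 ≤ i ≤ n, and a_k := ∑_{i=1}^k γ_{n,i}². Then for all 1 ≤ k ≤ n−1, a_k = k − ∑_{j=1}^k 1/j + k·(1 + ∑_{j=k+1}^n 1/j)², and for k = n, a_n = 2n − ∑_{j=1}^n 1/j. -/
/-!
Write `H_k = ∑_{j=1}^k 1/j` and `T_k = ∑_{j=k+1}^n 1/j`, so that `γ_{n,k+1} = T_k`. The identity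
`∑_{i=1}^k γ_{n,i}² = k - H_k + k (1 + T_k)²` holds for every `k ≤ n`, and
passing from `k` to `k + 1` adds `T_k²` on the left; with `T_k = 1/(k+1) + T_{k+1}` the two sides
change by the same amount. At `k = n` the tail `T_n` is empty, which gives `2n - H_n`.
-/

open Finset

variable {K : Type*} [Field K] [CharZero K]

lemma sum_Icc_eq_add_sum_Icc_succ {M : Type*} [AddCommMonoid M] {i n : ℕ} (h : i ≤ n)
    (f : ℕ → M) : ∑ j ∈ Icc i n, f j = f i + ∑ j ∈ Icc (i + 1) n, f j := by
  rw [Icc_eq_cons_Ioc h, sum_cons, Icc_add_one_left_eq_Ioc]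

lemma sum_sq_tail_eq {n k : ℕ} (hk : k ≤ n) :
    ∑ i ∈ Icc 1 k, (∑ j ∈ Icc i n, (1 : K) / j) ^ 2 =
      k - ∑ j ∈ Icc 1 k, (1 : K) / j + k * (1 + ∑ j ∈ Icc (k + 1) n, (1 : K) / j) ^ 2 := by
  induction k with
  | zero => simp
  | succ k ih =>
    rw [sum_Icc_succ_top (by omega), sum_Icc_succ_top (by omega), ih (by omega),
      sum_Icc_eq_add_sum_Icc_succ hk]
    push_cast
    field_simp
    ring

theorem stmt_7_general (n : ℕ) :
    (∀ k : ℕ, 1 ≤ k → k ≤ n - 1 →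
      ∑ i ∈ Finset.Icc 1 k, (∑ j ∈ Finset.Icc i n, (1 : ℝ) / j) ^ 2 =
        (k : ℝ) - (∑ j ∈ Finset.Icc 1 k, (1 : ℝ) / j)
          + (k : ℝ) * (1 + ∑ j ∈ Finset.Icc (k + 1) n, (1 : ℝ) / j) ^ 2) ∧
    ∑ i ∈ Finset.Icc 1 n, (∑ j ∈ Finset.Icc i n, (1 : ℝ) / j) ^ 2 =
      2 * (n : ℝ) - ∑ j ∈ Finset.Icc 1 n, (1 : ℝ) / j := by
  refine ⟨fun k _ hkn => sum_sq_tail_eq (by omega), ?_⟩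
  rw [sum_sq_tail_eq le_rfl, Icc_eq_empty (Nat.lt_succ_self n).not_ge, sum_empty]
  ring

/-- **Closed form for sums of squared harmonic tails (Lemma 3).**
With `γ_{n,i} = ∑_{j=i}^n 1/j` and `a_k = ∑_{i=1}^k γ_{n,i}²`:
for `1 ≤ k ≤ n-1`, `a_k = k - ∑_{j=1}^k 1/j + k (1 + ∑_{j=k+1}^n 1/j)²`,
and `a_n = 2n - ∑_{j=1}^n 1/j`. -/
theorem stmt_7 (n : ℕ) (hn : 1 ≤ n) :
    (∀ k : ℕ, 1 ≤ k → k ≤ n - 1 →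
      ∑ i ∈ Finset.Icc 1 k, (∑ j ∈ Finset.Icc i n, (1 : ℝ) / j) ^ 2 =
        (k : ℝ) - (∑ j ∈ Finset.Icc 1 k, (1 : ℝ) / j)
          + (k : ℝ) * (1 + ∑ j ∈ Finset.Icc (k + 1) n, (1 : ℝ) / j) ^ 2) ∧
    ∑ i ∈ Finset.Icc 1 n, (∑ j ∈ Finset.Icc i n, (1 : ℝ) / j) ^ 2 =
      2 * (n : ℝ) - ∑ j ∈ Finset.Icc 1 n, (1 : ℝ) / j :=
  stmt_7_general n
end

section
/- Limiting weight in the moving average variance: Fix η ∈ [0,1) and set n_η := ⌊ηn⌋ and γ_{n,i} := ∑_{j=i}^n 1/j. Then lim_{n→∞} (1/(n − n_η)) · [ n_η · (∑_{j=n_η+1}^n 1/j)² + ∑_{i=n_η+1}^n γ_{n,i}² ] = (1−η)·w_η, where w_η := 2/(1−η) + 2η·ln(η)/(1−η)² (with w_0 := 2). In particular, for η = 0 this reads lim_{n→∞} (1/n)∑_{i=1}^n γ_{n,i}² = 2. -/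
/-!
With `m = ⌊ηn⌋` and `T = ∑_{j=m+1}^n 1/j`, the bracket has the closed form
`2(n - m) - (1 + 2m) T`, proved by descending induction on `m`: lowering `m` by one adds
the square `γ_{n,m}² = (T + 1/m)²`. Since `T = H_n - H_m` and `H_n - log n` converges (to Euler's
constant), `T → -log η` when `η > 0`, while `T / n ≤ H_n / n → 0` always. Hence the
normalized bracket tends to `2 + 2η log η / (1 - η) = (1 - η) w_η`.
-/

open Filter Finset Topology Real

/-- `harmonicTail i n` is `γ_{n,i}`. -/
noncomputable def harmonicTail (i n : ℕ) : ℝ := ∑ j ∈ Icc i n, (1 : ℝ) / j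

lemma harmonicTail_eq_one_div_add {i n : ℕ} (h : i ≤ n) :
    harmonicTail i n = 1 / i + harmonicTail (i + 1) n := by
  rw [harmonicTail, harmonicTail, Icc_add_one_left_eq_Ioc]
  exact (add_sum_Ioc_eq_sum_Icc h).symm

lemma harmonicTail_add_one_eq_harmonic_sub {m n : ℕ} (h : m ≤ n) :
    harmonicTail (m + 1) n = harmonic n - harmonic m := by
  have hIcc (k : ℕ) : Icc 1 k = Ioc 0 k := Icc_add_one_left_eq_Ioc 0 k
  simp only [harmonicTail, harmonic_eq_sum_Icc, Rat.cast_sum, Rat.cast_inv, Rat.cast_natCast,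
    one_div, Icc_add_one_left_eq_Ioc, hIcc]
  rw [← sum_Ioc_consecutive _ (Nat.zero_le m) h, add_sub_cancel_left]

lemma harmonicTail_add_one_le_harmonic (m n : ℕ) : harmonicTail (m + 1) n ≤ harmonic n := by
  simp only [harmonicTail, harmonic_eq_sum_Icc, Rat.cast_sum, Rat.cast_inv, Rat.cast_natCast,
    one_div]
  exact sum_le_sum_of_subset_of_nonneg (Icc_subset_Icc_left (by omega))
    fun j _ _ ↦ by positivity

lemma mul_harmonicTail_sq_add_sum_sq {m n : ℕ} (h : m ≤ n) :
    (m : ℝ) * harmonicTail (m + 1) n ^ 2 + ∑ i ∈ Icc (m + 1) n, harmonicTail i n ^ 2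
      = 2 * ((n : ℝ) - m) - (1 + 2 * m) * harmonicTail (m + 1) n := by
  induction h using Nat.decreasingInduction with
  | self => simp [harmonicTail]
  | of_succ k hk ih =>
    have hk' : k + 1 ≤ n := hk
    rw [← add_sum_Ioc_eq_sum_Icc hk', ← Icc_add_one_left_eq_Ioc,
      harmonicTail_eq_one_div_add hk']
    push_cast at ih ⊢
    set a : ℝ := 1 / ((k : ℝ) + 1)
    set T := harmonicTail (k + 1 + 1) n
    have ha : ((k : ℝ) + 1) * a = 1 := mul_one_div_cancel (by positivity)
    linear_combination ih + (a + 2 * T + 2) * ha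

lemma tendsto_harmonicTail_floor_mul {η : ℝ} (hη0 : 0 < η) (hη1 : η ≤ 1) :
    Tendsto (fun n : ℕ ↦ harmonicTail (⌊η * n⌋₊ + 1) n) atTop (𝓝 (-log η)) := by
  have hm : Tendsto (fun n : ℕ ↦ ⌊η * n⌋₊) atTop atTop :=
    tendsto_nat_floor_atTop.comp (tendsto_natCast_atTop_atTop.const_mul_atTop hη0)
  have hratio : Tendsto (fun n : ℕ ↦ (⌊η * n⌋₊ : ℝ) / n) atTop (𝓝 η) :=
    (tendsto_nat_floor_mul_div_atTop hη0.le).comp tendsto_natCast_atTop_atTop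
  have h := (tendsto_harmonic_sub_log.sub (tendsto_harmonic_sub_log.comp hm)).sub
    (hratio.log hη0.ne')
  rw [sub_self, zero_sub] at h
  refine h.congr' ?_
  filter_upwards [hm.eventually_ge_atTop 1] with n hn
  have hmn : ⌊η * n⌋₊ ≤ n := Nat.floor_le_of_le (by nlinarith [n.cast_nonneg (α := ℝ)])
  have hm0 : (0 : ℝ) < ⌊η * n⌋₊ := by exact_mod_cast hn
  have hn0 : (0 : ℝ) < n := by exact_mod_cast hn.trans hmn
  rw [harmonicTail_add_one_eq_harmonic_sub hmn, Function.comp_apply,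
    log_div hm0.ne' hn0.ne']
  ring

lemma tendsto_harmonicTail_div_atTop (m : ℕ → ℕ) :
    Tendsto (fun n : ℕ ↦ harmonicTail (m n + 1) n / n) atTop (𝓝 0) := by
  have hlog : Tendsto (fun n : ℕ ↦ log n / n) atTop (𝓝 0) :=
    isLittleO_log_id_atTop.tendsto_div_nhds_zero.comp tendsto_natCast_atTop_atTop
  have hharmonic : Tendsto (fun n : ℕ ↦ (harmonic n : ℝ) / n) atTop (𝓝 0) := by
    have h := (tendsto_harmonic_sub_log.div_atTop tendsto_natCast_atTop_atTop).add hlog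
    rw [zero_add] at h
    exact h.congr fun n ↦ by ring
  refine squeeze_zero (fun n ↦ ?_) (fun n ↦ ?_) hharmonic
  · exact div_nonneg (sum_nonneg fun j _ ↦ by positivity) n.cast_nonneg
  · exact div_le_div_of_nonneg_right (harmonicTail_add_one_le_harmonic _ _) n.cast_nonneg

lemma tendsto_floor_mul_div_mul_harmonicTail {η : ℝ} (hη0 : 0 ≤ η) (hη1 : η ≤ 1) :
    Tendsto (fun n : ℕ ↦ (⌊η * n⌋₊ : ℝ) / n * harmonicTail (⌊η * n⌋₊ + 1) n) atTop
      (𝓝 (η * -log η)) := by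
  rcases hη0.eq_or_lt with rfl | hpos
  · simp
  · exact ((tendsto_nat_floor_mul_div_atTop hη0).comp tendsto_natCast_atTop_atTop).mul
      (tendsto_harmonicTail_floor_mul hpos hη1)

lemma tendsto_floor_mul_harmonicTail_sq_average {η : ℝ} (hη0 : 0 ≤ η) (hη1 : η < 1) :
    Tendsto (fun n : ℕ ↦ 1 / ((n : ℝ) - ⌊η * n⌋₊) *
        ((⌊η * n⌋₊ : ℝ) * harmonicTail (⌊η * n⌋₊ + 1) n ^ 2
          + ∑ i ∈ Icc (⌊η * n⌋₊ + 1) n, harmonicTail i n ^ 2))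
      atTop (𝓝 (2 + 2 * η * log η / (1 - η))) := by
  have hlim := tendsto_const_nhds (x := (2 : ℝ)) |>.sub <|
    ((tendsto_harmonicTail_div_atTop fun n : ℕ ↦ ⌊η * n⌋₊).add
      ((tendsto_floor_mul_div_mul_harmonicTail hη0 hη1.le).const_mul 2)).div
    (tendsto_const_nhds.sub
      ((tendsto_nat_floor_mul_div_atTop hη0).comp tendsto_natCast_atTop_atTop))
    (sub_ne_zero.2 hη1.ne')
  rw [show 2 + 2 * η * log η / (1 - η) = 2 - (0 + 2 * (η * -log η)) / (1 - η) by ring]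
  refine hlim.congr' ?_
  filter_upwards [eventually_ge_atTop 1] with n hn
  have hn0 : (0 : ℝ) < n := by exact_mod_cast hn
  have hmn : (⌊η * n⌋₊ : ℝ) < n := by
    exact_mod_cast (Nat.floor_lt (by positivity)).2 (by nlinarith)
  rw [mul_harmonicTail_sq_add_sum_sq (Nat.cast_lt.1 hmn).le]
  simp only [Pi.div_apply, Function.comp_apply]
  have hgap : (n : ℝ) - ⌊η * n⌋₊ ≠ 0 := sub_ne_zero.2 hmn.ne'
  field_simp

/-- **Limiting weight in the moving average variance.**
For `η ∈ [0,1)`, with `n_η = ⌊ηn⌋` and `γ_{n,i} = ∑_{j=i}^n 1/j`,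
`(1/(n-n_η)) [ n_η (∑_{j=n_η+1}^n 1/j)² + ∑_{i=n_η+1}^n γ_{n,i}² ] → (1-η) w_η`,
where `w_η = 2/(1-η) + 2η ln η/(1-η)²` (this formula evaluates to `w_0 = 2` at `η = 0`,
since `Real.log 0 = 0`).  In particular, for `η = 0`, `(1/n) ∑_{i=1}^n γ_{n,i}² → 2`. -/
theorem stmt_8 (η : ℝ) (hη0 : 0 ≤ η) (hη1 : η < 1)
    (w : ℝ) (hw : w = 2 / (1 - η) + 2 * η * Real.log η / (1 - η) ^ 2) :
    Tendsto (fun n : ℕ =>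
        (1 / ((n : ℝ) - (⌊η * (n : ℝ)⌋₊ : ℝ))) *
          ((⌊η * (n : ℝ)⌋₊ : ℝ) * (∑ j ∈ Finset.Icc (⌊η * (n : ℝ)⌋₊ + 1) n, (1 : ℝ) / j) ^ 2 +
            ∑ i ∈ Finset.Icc (⌊η * (n : ℝ)⌋₊ + 1) n, (∑ j ∈ Finset.Icc i n, (1 : ℝ) / j) ^ 2))
      atTop (nhds ((1 - η) * w)) ∧
    (η = 0 → Tendsto (fun n : ℕ =>
        (1 / (n : ℝ)) * ∑ i ∈ Finset.Icc 1 n, (∑ j ∈ Finset.Icc i n, (1 : ℝ) / j) ^ 2)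
      atTop (nhds 2)) := by
  have hlim := tendsto_floor_mul_harmonicTail_sq_average hη0 hη1
  rw [show 2 + 2 * η * log η / (1 - η) = (1 - η) * w by
    rw [hw]; field_simp [sub_ne_zero.2 hη1.ne']] at hlim
  refine ⟨hlim, ?_⟩
  rintro rfl
  simpa [hw, harmonicTail] using hlim
end

section
/- Closed-form data-collection quantities from the KKT conditions (equation (23)): Let Q ≥ 1 and K ≥ 2 be integers, b ∈ {1,…,K}, and let c_S > 0, λ > 0, and for each q, c_{D,q} > 0 and N_q > 0, and for each i ≠ b, δ_{bi} > 0, σ_i > 0, Ψ_{bi} > 0, M_i > 0, ψ_{bi}(q) ≥ 0. Suppose that the stationarity conditions hold: for every q, c_{D,q}·λ = ∑_{i≠b} (1/(2√(2π)))·exp(−δ_{bi}²/(2Ψ_{bi}²))·δ_{bi}·ψ_{bi}²(q)/(Ψ_{bi}³·N_q²), and for every i ≠ b, c_S·λ = (1/(2√(2π)))·exp(−δ_{bi}²/(2Ψ_{bi}²))·δ_{bi}·σ_i²/(Ψ_{bi}³·M_i²). Then for every q, N_q = √( (c_S/c_{D,q}) · ∑_{i≠b} M_i²·ψ_{bi}²(q)/σ_i²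 ). -/
/-!
Both stationarity conditions share the factor
`w_i = exp(-δ_{bi}²/(2Ψ_{bi}²)) δ_{bi} / (2√(2π) Ψ_{bi}³)`.
The condition for `M_i` pins it down as `w_i = c_S λ M_i² / σ_i²`; substituting this into the
condition for `N_q` gives `c_{D,q} λ N_q² = c_S λ ∑_{i≠b} M_i² ψ_{bi}²(q) / σ_i²`, and one
cancels `λ` and takes the positive square root.
-/

open Finset

theorem sq_eq_of_stationarity {ι : Type*} (s : Finset ι) (w ψ σ M : ι → ℝ) {cD cS lam N : ℝ}
    (hcD : cD ≠ 0) (hlam : lam ≠ 0) (hN : N ≠ 0)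
    (hσ : ∀ i ∈ s, σ i ≠ 0) (hM : ∀ i ∈ s, M i ≠ 0)
    (hstatN : cD * lam = ∑ i ∈ s, w i * (ψ i ^ 2 / N ^ 2))
    (hstatM : ∀ i ∈ s, cS * lam = w i * (σ i ^ 2 / M i ^ 2)) :
    N ^ 2 = cS / cD * ∑ i ∈ s, M i ^ 2 * ψ i ^ 2 / σ i ^ 2 := by
  have hw : ∀ i ∈ s, w i = cS * lam * M i ^ 2 / σ i ^ 2 := fun i hi => by
    have := hσ i hi
    have := hM i hi
    rw [hstatM i hi]
    field_simp
  have hsum : cD * lam * N ^ 2 = cS * lam * ∑ i ∈ s, M i ^ 2 * ψ i ^ 2 / σ i ^ 2 := by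
    rw [hstatN, sum_mul, mul_sum]
    refine sum_congr rfl fun i hi => ?_
    rw [hw i hi]
    field_simp
  field_simp
  exact mul_left_cancel₀ hlam (by linear_combination hsum)

theorem stmt_16_general (Q K : ℕ) (b : Fin K)
    (cS lam : ℝ) (hlam : 0 < lam)
    (cD N : Fin Q → ℝ) (hcD : ∀ q, 0 < cD q) (hN : ∀ q, 0 < N q)
    (δ σ Ψ M : Fin K → ℝ) (ψ : Fin K → Fin Q → ℝ)
    (hσ : ∀ i, i ≠ b → 0 < σ i)
    (hM : ∀ i, i ≠ b → 0 < M i)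
    (hstat1 : ∀ q, cD q * lam = ∑ i ∈ Finset.univ.erase b,
        (1 / (2 * Real.sqrt (2 * Real.pi))) * Real.exp (-(δ i) ^ 2 / (2 * (Ψ i) ^ 2)) *
          (δ i * (ψ i q) ^ 2 / ((Ψ i) ^ 3 * (N q) ^ 2)))
    (hstat2 : ∀ i, i ≠ b → cS * lam = (1 / (2 * Real.sqrt (2 * Real.pi))) *
        Real.exp (-(δ i) ^ 2 / (2 * (Ψ i) ^ 2)) * (δ i * (σ i) ^ 2 / ((Ψ i) ^ 3 * (M i) ^ 2))) :
    ∀ q, N q = Real.sqrt ((cS / cD q) *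
      ∑ i ∈ Finset.univ.erase b, (M i) ^ 2 * (ψ i q) ^ 2 / (σ i) ^ 2) := by
  intro q
  set w : Fin K → ℝ := fun i =>
    1 / (2 * Real.sqrt (2 * Real.pi)) * Real.exp (-(δ i) ^ 2 / (2 * (Ψ i) ^ 2)) * (δ i / Ψ i ^ 3)
  have hsq := sq_eq_of_stationarity (univ.erase b) w (ψ · q) σ M (hcD q).ne' hlam.ne' (hN q).ne'
    (fun i hi => (hσ i (ne_of_mem_erase hi)).ne') (fun i hi => (hM i (ne_of_mem_erase hi)).ne')
    (by rw [hstat1 q]; exact sum_congr rfl fun i _ => by ring)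
    (fun i hi => by rw [hstat2 i (ne_of_mem_erase hi)]; ring)
  rw [← hsq, Real.sqrt_sq (hN q).le]

/-- **Closed-form data-collection quantities from the KKT conditions (equation (23)).**
If the stationarity conditions of the OCBAIU Lagrangian hold, then for every input
distribution `q`, `N_q = √((c_S/c_{D,q}) ∑_{i≠b} M_i² ψ_{bi}²(q)/σ_i²)`. -/
theorem stmt_16 (Q K : ℕ) (hQ : 1 ≤ Q) (hK : 2 ≤ K) (b : Fin K)
    (cS lam : ℝ) (hcS : 0 < cS) (hlam : 0 < lam)
    (cD N : Fin Q → ℝ) (hcD : ∀ q, 0 < cD q) (hN : ∀ q, 0 < N q)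
    (δ σ Ψ M : Fin K → ℝ) (ψ : Fin K → Fin Q → ℝ)
    (hδ : ∀ i, i ≠ b → 0 < δ i) (hσ : ∀ i, i ≠ b → 0 < σ i)
    (hΨ : ∀ i, i ≠ b → 0 < Ψ i) (hM : ∀ i, i ≠ b → 0 < M i)
    (hψ : ∀ i q, i ≠ b → 0 ≤ ψ i q)
    (hstat1 : ∀ q, cD q * lam = ∑ i ∈ Finset.univ.erase b,
        (1 / (2 * Real.sqrt (2 * Real.pi))) * Real.exp (-(δ i) ^ 2 / (2 * (Ψ i) ^ 2)) *
          (δ i * (ψ i q) ^ 2 / ((Ψ i) ^ 3 * (N q) ^ 2)))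
    (hstat2 : ∀ i, i ≠ b → cS * lam = (1 / (2 * Real.sqrt (2 * Real.pi))) *
        Real.exp (-(δ i) ^ 2 / (2 * (Ψ i) ^ 2)) * (δ i * (σ i) ^ 2 / ((Ψ i) ^ 3 * (M i) ^ 2))) :
    ∀ q, N q = Real.sqrt ((cS / cD q) *
      ∑ i ∈ Finset.univ.erase b, (M i) ^ 2 * (ψ i q) ^ 2 / (σ i) ^ 2) :=
  stmt_16_general Q K b cS lam hlam cD N hcD hN δ σ Ψ M ψ hσ hM hstat1 hstat2
end
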